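/- Let E be a real inner product space, let q ∈ E be nonzero, let τ > 0 and C > 0, and define f : E → ℝ by f(u) = −log( exp(⟪q,u⟫/τ) / (exp(⟪q,u⟫/τ) + C) ). Then f is differentiable at every u, its Fréchet derivative at u is the map w ↦ −((1 − p(u))/τ) · ⟪q, w⟫ where p(u) = exp(⟪q,u⟫/τ)/(exp(⟪q,u⟫/τ)+C), the gradient of f at u equals −((1 − p(u))/τ) • q = −(‖q‖(1 − p(u))/τ) • q̂, and the norm of this gradient equals (‖q‖/τ)(1 − p(u)). In particular the gradient magnitude with respect to the positive document is proportional to the query magnitude ‖q‖. -/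

import Mathlib

/-!
Writing `p = exp s / (exp s + C)`, the loss is `log (exp s + C) - s`, whose derivative in the
logit `s` is `p - 1`. Since the logit `⟪q, u⟫ / τ` depends on `u` only through the linear map
`⟪q, ·⟫ / τ`, the chain rule gives the gradient `-((1 - p) / τ) • q`: a nonnegative multiple
of `-q`, hence of norm `(‖q‖ / τ) (1 - p)`.
-/

open Real RealInnerProductSpace

lemma exp_div_exp_add_le_one {C : ℝ} (hC : 0 ≤ C) (s : ℝ) : exp s / (exp s + C) ≤ 1 :=
  div_le_one_of_le₀ (le_add_of_nonneg_right hC) (by positivity)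

lemma neg_log_exp_div_exp_add {C : ℝ} (hC : 0 ≤ C) (s : ℝ) :
    -log (exp s / (exp s + C)) = log (exp s + C) - s := by
  rw [log_div (exp_pos s).ne' (by positivity), log_exp, neg_sub]

lemma hasDerivAt_neg_log_exp_div_exp_add {C : ℝ} (hC : 0 ≤ C) (s : ℝ) :
    HasDerivAt (fun s => -log (exp s / (exp s + C))) (-(1 - exp s / (exp s + C))) s := by
  simp only [neg_log_exp_div_exp_add hC]
  have h := (((hasDerivAt_exp s).add_const C).log (by positivity)).sub (hasDerivAt_id s)
  exact h.congr_deriv (by ring)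

lemma hasFDerivAt_neg_log_exp_inner_div {E : Type*} [NormedAddCommGroup E]
    [InnerProductSpace ℝ E] (q : E) (τ : ℝ) {C : ℝ} (hC : 0 ≤ C) (u : E) :
    HasFDerivAt (fun u : E => -log (exp (⟪q, u⟫ / τ) / (exp (⟪q, u⟫ / τ) + C)))
      ((-((1 - exp (⟪q, u⟫ / τ) / (exp (⟪q, u⟫ / τ) + C)) / τ)) • innerSL ℝ q) u := by
  have hlogit : HasDerivAt (fun t : ℝ => t / τ) (1 / τ) ⟪q, u⟫ :=
    (hasDerivAt_id _).div_const τ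
  have hscalar := (hasDerivAt_neg_log_exp_div_exp_add hC (⟪q, u⟫ / τ)).comp ⟪q, u⟫ hlogit
  exact (hscalar.comp_hasFDerivAt u (innerSL ℝ q).hasFDerivAt).congr_fderiv
    (congrArg (· • innerSL ℝ q) (by ring))

lemma HasFDerivAt.hasGradientAt_of_smul_innerSL {E : Type*} [NormedAddCommGroup E]
    [InnerProductSpace ℝ E] [CompleteSpace E] {f : E → ℝ} {c : ℝ} {q u : E}
    (hf : HasFDerivAt f (c • innerSL ℝ q) u) : HasGradientAt f (c • q) u := by
  rwa [hasGradientAt_iff_hasFDerivAt, map_smul]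

theorem infoNCE_gradient_proportional_to_query_magnitude_general {E : Type*}
    [NormedAddCommGroup E] [InnerProductSpace ℝ E] [CompleteSpace E]
    (q : E) (τ C : ℝ) (hτ : 0 < τ) (hC : 0 < C) (u : E) :
    HasFDerivAt
        (fun u : E => -Real.log (Real.exp (⟪q, u⟫ / τ) / (Real.exp (⟪q, u⟫ / τ) + C)))
        ((-((1 - Real.exp (⟪q, u⟫ / τ) / (Real.exp (⟪q, u⟫ / τ) + C)) / τ)) • innerSL ℝ q)
        u ∧
    HasGradientAt
        (fun u : E => -Real.log (Real.exp (⟪q, u⟫ / τ) / (Real.exp (⟪q, u⟫ / τ) + C)))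
        ((-((1 - Real.exp (⟪q, u⟫ / τ) / (Real.exp (⟪q, u⟫ / τ) + C)) / τ)) • q) u ∧
    (-((1 - Real.exp (⟪q, u⟫ / τ) / (Real.exp (⟪q, u⟫ / τ) + C)) / τ)) • q =
      (-(‖q‖ * (1 - Real.exp (⟪q, u⟫ / τ) / (Real.exp (⟪q, u⟫ / τ) + C)) / τ)) •
        (‖q‖⁻¹ • q) ∧
    ‖(-((1 - Real.exp (⟪q, u⟫ / τ) / (Real.exp (⟪q, u⟫ / τ) + C)) / τ)) • q‖ =
      (‖q‖ / τ) * (1 - Real.exp (⟪q, u⟫ / τ) / (Real.exp (⟪q, u⟫ / τ) + C)) := by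
  set p := exp (⟪q, u⟫ / τ) / (exp (⟪q, u⟫ / τ) + C)
  have hderiv := hasFDerivAt_neg_log_exp_inner_div q τ hC.le u
  have hweight : 0 ≤ (1 - p) / τ :=
    div_nonneg (sub_nonneg.mpr (exp_div_exp_add_le_one hC.le _)) hτ.le
  refine ⟨hderiv, hderiv.hasGradientAt_of_smul_innerSL, ?_, ?_⟩
  · calc (-((1 - p) / τ)) • q = (-((1 - p) / τ)) • (‖q‖ • NormedSpace.normalize q) := by
          rw [NormedSpace.norm_smul_normalize]
      _ = (-(‖q‖ * (1 - p) / τ)) • (‖q‖⁻¹ • q) := by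
          rw [smul_smul, NormedSpace.normalize]
          congr 1
          ring
  · rw [norm_smul, norm_neg, Real.norm_of_nonneg hweight]
    ring

/-- Gradient Asymmetry, parts (2)–(3): for
`f(u) = −log(exp(⟪q,u⟫/τ)/(exp(⟪q,u⟫/τ)+C))`, the Fréchet derivative at `u` is
`w ↦ −((1−p(u))/τ)·⟪q,w⟫`, the gradient is `−((1−p(u))/τ) • q = −(‖q‖(1−p(u))/τ) • q̂`,
and its norm is `(‖q‖/τ)(1−p(u))`, proportional to the query magnitude `‖q‖`. -/
theorem infoNCE_gradient_proportional_to_query_magnitude {E : Type*}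
    [NormedAddCommGroup E] [InnerProductSpace ℝ E] [CompleteSpace E]
    (q : E) (hq : q ≠ 0) (τ C : ℝ) (hτ : 0 < τ) (hC : 0 < C) (u : E) :
    HasFDerivAt
        (fun u : E => -Real.log (Real.exp (⟪q, u⟫ / τ) / (Real.exp (⟪q, u⟫ / τ) + C)))
        ((-((1 - Real.exp (⟪q, u⟫ / τ) / (Real.exp (⟪q, u⟫ / τ) + C)) / τ)) • innerSL ℝ q)
        u ∧
    HasGradientAt
        (fun u : E => -Real.log (Real.exp (⟪q, u⟫ / τ) / (Real.exp (⟪q, u⟫ / τ) + C)))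
        ((-((1 - Real.exp (⟪q, u⟫ / τ) / (Real.exp (⟪q, u⟫ / τ) + C)) / τ)) • q) u ∧
    (-((1 - Real.exp (⟪q, u⟫ / τ) / (Real.exp (⟪q, u⟫ / τ) + C)) / τ)) • q =
      (-(‖q‖ * (1 - Real.exp (⟪q, u⟫ / τ) / (Real.exp (⟪q, u⟫ / τ) + C)) / τ)) •
        (‖q‖⁻¹ • q) ∧
    ‖(-((1 - Real.exp (⟪q, u⟫ / τ) / (Real.exp (⟪q, u⟫ / τ) + C)) / τ)) • q‖ =
      (‖q‖ / τ) * (1 - Real.exp (⟪q, u⟫ / τ) / (Real.exp (⟪q, u⟫ / τ) + C)) :=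
  infoNCE_gradient_proportional_to_query_magnitude_general q τ C hτ hC u
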